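/- For every n ∈ ℕ with n ≥ 1 and all θ, θ* > 0, all the integrals below converge absolutely and ∫₀^∞ (e^{−x/θ}/θ) [ ∫₀¹ u^{−1} ((x(1−u))^n − x^n)/n! du + ∫₀^∞ u^{−1} e^{−u} ((x + u θ*)^n − x^n)/n! du ] dx = ∫₀¹ u^{−1} [ ((1−u)θ + u θ*)^n − θ^n ] du. Moreover, both sides equal θ^n ∫₀¹ u^{−1}((1−u)^n − 1) du + ∑_{k=1}^{n} θ^{n−k} (θ*)^k / k. (This is the intertwining, on monomials, of the boundary generator of the continuous harmonic model with the boundary generator of its hidden-parameter model via the exponential kernel.) -/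

import Mathlib

open MeasureTheory Real Set

/-!
Both generators map polynomials to polynomials, so every integral reduces to finitely many
elementary ones. On the hidden-parameter side, `y ^ n - θ ^ n = (y - θ) ∑ y ^ j θ ^ (n - 1 - j)`
with `y - θ = u (θ* - θ)` cancels the singular factor `u⁻¹`, leaving a polynomial in `u`. On the
harmonic side the thinning part is `x ^ n / n!` times `∫₀¹ u⁻¹ ((1 - u) ^ n - 1) du`, while the
binomial theorem turns the reservoir part into Gamma integrals, giving
`∑ₖ (θ*) ^ k / k · x ^ (n - k) / (n - k)!`. Averaging against the exponential law of mean `θ`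
sends `x ^ m / m!` to `θ ^ m`; splitting the hidden-parameter sum into its `θ*`- and `θ`-parts
identifies the two.
-/

theorem sum_Icc_one_eq_sum_range {M : Type*} [AddCommMonoid M] (f : ℕ → M) (n : ℕ) :
    ∑ k ∈ Finset.Icc 1 n, f k = ∑ j ∈ Finset.range n, f (j + 1) := by
  rw [Finset.range_eq_Ico, Finset.sum_Ico_add']
  rfl

theorem choose_mul_factorial_pred_div_factorial {K : Type*} [Field K] [CharZero K] {n k : ℕ}
    (hk : 1 ≤ k) (hkn : k ≤ n) :
    (n.choose k : K) * (k - 1).factorial / n.factorial = (k : K)⁻¹ / (n - k).factorial := by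
  rw [Nat.cast_choose K hkn, ← Nat.mul_factorial_pred (by omega : k ≠ 0)]
  push_cast
  have : (k : K) ≠ 0 := by exact_mod_cast (by omega : k ≠ 0)
  have := (n - k).factorial_ne_zero
  have := (k - 1).factorial_ne_zero
  have := n.factorial_ne_zero
  field_simp

theorem integrableOn_pow_mul_exp_neg_mul (m : ℕ) {r : ℝ} (hr : 0 < r) :
    IntegrableOn (fun x : ℝ => x ^ m * exp (-(r * x))) (Ioi 0) := by
  have h := integrableOn_rpow_mul_exp_neg_mul_rpow (s := m) (p := 1)
    (by linarith [m.cast_nonneg (α := ℝ)]) one_pos hr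
  refine h.congr_fun (fun x _ => ?_) measurableSet_Ioi
  simp [rpow_natCast]

theorem integral_pow_mul_exp_neg_mul (m : ℕ) {r : ℝ} (hr : 0 < r) :
    ∫ x in Ioi (0:ℝ), x ^ m * exp (-(r * x)) = m.factorial / r ^ (m + 1) := by
  have h := integral_rpow_mul_exp_neg_mul_Ioi (a := (m : ℝ) + 1) (by positivity) hr
  simp only [add_sub_cancel_right, rpow_natCast] at h
  rw [h, Gamma_nat_eq_factorial, ← Nat.cast_add_one, rpow_natCast, one_div_pow]
  field_simp

theorem inv_mul_affine_pow_sub_pow {K : Type*} [Field K] (n : ℕ) (a b : K) {u : K} (hu : u ≠ 0) :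
    u⁻¹ * (((1 - u) * a + u * b) ^ n - a ^ n)
      = (b - a) * ∑ j ∈ Finset.range n, ((1 - u) * a + u * b) ^ j * a ^ (n - 1 - j) := by
  rw [← geom_sum₂_mul]
  field_simp
  ring

theorem integral_Ioo_affine_pow (j : ℕ) (a b : ℝ) :
    ∫ u in Ioo (0:ℝ) 1, (b - a) * ((1 - u) * a + u * b) ^ j
      = (b ^ (j + 1) - a ^ (j + 1)) / (j + 1) := by
  have h := intervalIntegral.mul_integral_comp_mul_add (a := 0) (b := 1)
    (f := fun y : ℝ => y ^ j) (c := b - a) (d := a)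
  simp only [mul_zero, zero_add, mul_one, sub_add_cancel, integral_pow] at h
  rw [← integral_Ioc_eq_integral_Ioo, ← intervalIntegral.integral_of_le zero_le_one,
    intervalIntegral.integral_const_mul, ← h]
  congr 2 with u
  ring

theorem integrableOn_inv_mul_affine_pow_sub_pow (n : ℕ) (a b : ℝ) :
    IntegrableOn (fun u : ℝ => u⁻¹ * (((1 - u) * a + u * b) ^ n - a ^ n)) (Ioo 0 1) := by
  have hpoly : Continuous fun u : ℝ =>
      (b - a) * ∑ j ∈ Finset.range n, ((1 - u) * a + u * b) ^ j * a ^ (n - 1 - j) := by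
    fun_prop
  exact (hpoly.integrableOn_Icc.mono_set Ioo_subset_Icc_self).congr_fun
    (fun u hu => (inv_mul_affine_pow_sub_pow n a b hu.1.ne').symm) measurableSet_Ioo

theorem integral_inv_mul_affine_pow_sub_pow (n : ℕ) (a b : ℝ) :
    ∫ u in Ioo (0:ℝ) 1, u⁻¹ * (((1 - u) * a + u * b) ^ n - a ^ n)
      = ∑ j ∈ Finset.range n, (b ^ (j + 1) - a ^ (j + 1)) / (j + 1) * a ^ (n - 1 - j) := by
  rw [setIntegral_congr_fun measurableSet_Ioo
      (fun u hu => inv_mul_affine_pow_sub_pow n a b (ne_of_gt (mem_Ioo.mp hu).1))]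
  simp_rw [Finset.mul_sum]
  rw [integral_finsetSum _ fun j _ =>
      (Continuous.integrableOn_Icc (by fun_prop)).mono_set Ioo_subset_Icc_self]
  refine Finset.sum_congr rfl fun j _ => ?_
  simp_rw [← mul_assoc]
  rw [integral_mul_const, integral_Ioo_affine_pow]

theorem integrableOn_inv_mul_one_sub_pow_sub_one (n : ℕ) :
    IntegrableOn (fun u : ℝ => u⁻¹ * ((1 - u) ^ n - 1)) (Ioo 0 1) := by
  simpa using integrableOn_inv_mul_affine_pow_sub_pow n 1 0

theorem integral_inv_mul_one_sub_pow_sub_one (n : ℕ) :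
    ∫ u in Ioo (0:ℝ) 1, u⁻¹ * ((1 - u) ^ n - 1) = -∑ j ∈ Finset.range n, ((j : ℝ) + 1)⁻¹ := by
  simpa [← Finset.sum_neg_distrib, neg_div] using integral_inv_mul_affine_pow_sub_pow n 1 0

theorem sum_range_pow_sub_pow_div_mul_pow {K : Type*} [Field K] [CharZero K] (n : ℕ) (a b : K) :
    ∑ j ∈ Finset.range n, (b ^ (j + 1) - a ^ (j + 1)) / (j + 1) * a ^ (n - 1 - j)
      = a ^ n * -∑ j ∈ Finset.range n, ((j : K) + 1)⁻¹
        + ∑ k ∈ Finset.Icc 1 n, a ^ (n - k) * b ^ k / k := by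
  rw [sum_Icc_one_eq_sum_range, mul_neg, Finset.mul_sum, neg_add_eq_sub, ← Finset.sum_sub_distrib]
  refine Finset.sum_congr rfl fun j hj => ?_
  have hjn : j + 1 ≤ n := Finset.mem_range.mp hj
  have hpow : a ^ n = a ^ (n - (j + 1)) * a ^ (j + 1) := by rw [← pow_add, Nat.sub_add_cancel hjn]
  have hj : (j : K) + 1 ≠ 0 := by exact_mod_cast j.succ_ne_zero
  rw [hpow, show n - 1 - j = n - (j + 1) by omega]
  push_cast
  field_simp

theorem integral_inv_mul_affine_pow_sub_pow_eq (n : ℕ) (θ θs : ℝ) :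
    ∫ u in Ioo (0:ℝ) 1, u⁻¹ * (((1 - u) * θ + u * θs) ^ n - θ ^ n)
      = θ ^ n * (∫ u in Ioo (0:ℝ) 1, u⁻¹ * ((1 - u) ^ n - 1))
        + ∑ k ∈ Finset.Icc 1 n, θ ^ (n - k) * θs ^ k / k := by
  rw [integral_inv_mul_affine_pow_sub_pow, integral_inv_mul_one_sub_pow_sub_one,
    sum_range_pow_sub_pow_div_mul_pow]

theorem inv_mul_mul_one_sub_pow_sub_pow (n : ℕ) (x u : ℝ) :
    u⁻¹ * (((x * (1 - u)) ^ n - x ^ n) / n.factorial)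
      = x ^ n / n.factorial * (u⁻¹ * ((1 - u) ^ n - 1)) := by
  rw [mul_pow]
  ring

theorem integrableOn_thinning_pow (n : ℕ) (x : ℝ) :
    IntegrableOn (fun u : ℝ => u⁻¹ * (((x * (1 - u)) ^ n - x ^ n) / n.factorial)) (Ioo 0 1) := by
  simp_rw [inv_mul_mul_one_sub_pow_sub_pow]
  exact (integrableOn_inv_mul_one_sub_pow_sub_one n).const_mul _

theorem integral_thinning_pow (n : ℕ) (x : ℝ) :
    ∫ u in Ioo (0:ℝ) 1, u⁻¹ * (((x * (1 - u)) ^ n - x ^ n) / n.factorial)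
      = (∫ u in Ioo (0:ℝ) 1, u⁻¹ * ((1 - u) ^ n - 1)) * (x ^ n / n.factorial) := by
  simp_rw [inv_mul_mul_one_sub_pow_sub_pow]
  rw [integral_const_mul, mul_comm]

theorem inv_mul_add_mul_pow_sub_pow {K : Type*} [Field K] (n : ℕ) (x c : K) {u : K} (hu : u ≠ 0) :
    u⁻¹ * ((x + u * c) ^ n - x ^ n)
      = ∑ k ∈ Finset.Icc 1 n, (n.choose k : K) * x ^ (n - k) * c ^ k * u ^ (k - 1) := by
  rw [add_comm, add_pow, Finset.sum_range_succ', sum_Icc_one_eq_sum_range]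
  simp only [pow_zero, Nat.sub_zero, Nat.choose_zero_right, Nat.cast_one, mul_one, one_mul,
    add_sub_cancel_right, Nat.add_sub_cancel]
  rw [Finset.mul_sum]
  refine Finset.sum_congr rfl fun j _ => ?_
  field_simp
  ring

theorem reservoir_pow_eq_sum (n : ℕ) (θs x : ℝ) {u : ℝ} (hu : u ≠ 0) :
    u⁻¹ * exp (-u) * (((x + u * θs) ^ n - x ^ n) / n.factorial)
      = ∑ k ∈ Finset.Icc 1 n,
          (n.choose k * x ^ (n - k) * θs ^ k / n.factorial) * (u ^ (k - 1) * exp (-(1 * u))) := by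
  rw [mul_right_comm, mul_div_assoc', inv_mul_add_mul_pow_sub_pow n x θs hu, Finset.sum_div,
    Finset.sum_mul]
  refine Finset.sum_congr rfl fun k _ => ?_
  rw [one_mul]
  ring

theorem integrableOn_reservoir_pow (n : ℕ) (θs x : ℝ) :
    IntegrableOn (fun u : ℝ => u⁻¹ * exp (-u) * (((x + u * θs) ^ n - x ^ n) / n.factorial))
      (Ioi 0) := by
  refine IntegrableOn.congr_fun (integrable_finsetSum _ fun k _ =>
      (integrableOn_pow_mul_exp_neg_mul (k - 1) one_pos).const_mul _)
    (fun u hu => (reservoir_pow_eq_sum n θs x (ne_of_gt hu)).symm) measurableSet_Ioi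

theorem integral_reservoir_pow (n : ℕ) (θs x : ℝ) :
    ∫ u in Ioi (0:ℝ), u⁻¹ * exp (-u) * (((x + u * θs) ^ n - x ^ n) / n.factorial)
      = ∑ k ∈ Finset.Icc 1 n, θs ^ k / k * (x ^ (n - k) / (n - k).factorial) := by
  rw [setIntegral_congr_fun measurableSet_Ioi
      (fun u hu => reservoir_pow_eq_sum n θs x (ne_of_gt (mem_Ioi.mp hu))),
    integral_finsetSum _ fun k _ => (integrableOn_pow_mul_exp_neg_mul (k - 1) one_pos).const_mul _]
  refine Finset.sum_congr rfl fun k hk => ?_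
  obtain ⟨hk1, hkn⟩ := Finset.mem_Icc.mp hk
  rw [integral_const_mul, integral_pow_mul_exp_neg_mul _ one_pos, one_pow, div_one,
    show (n.choose k * x ^ (n - k) * θs ^ k / n.factorial : ℝ) * (k - 1).factorial
      = n.choose k * (k - 1).factorial / n.factorial * (x ^ (n - k) * θs ^ k) by ring,
    choose_mul_factorial_pred_div_factorial hk1 hkn]
  ring

theorem exp_div_mul_pow_eq (θ : ℝ) (m : ℕ) (x : ℝ) :
    exp (-x / θ) / θ * x ^ m = θ⁻¹ * (x ^ m * exp (-(θ⁻¹ * x))) := by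
  rw [neg_div, div_eq_inv_mul x]
  ring

theorem integrableOn_exp_div_mul_pow {θ : ℝ} (hθ : 0 < θ) (m : ℕ) :
    IntegrableOn (fun x : ℝ => exp (-x / θ) / θ * x ^ m) (Ioi 0) := by
  simp_rw [exp_div_mul_pow_eq θ]
  exact (integrableOn_pow_mul_exp_neg_mul m (inv_pos.mpr hθ)).const_mul _

theorem integral_exp_div_mul_pow {θ : ℝ} (hθ : 0 < θ) (m : ℕ) :
    ∫ x in Ioi (0:ℝ), exp (-x / θ) / θ * x ^ m = m.factorial * θ ^ m := by
  simp_rw [exp_div_mul_pow_eq θ]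
  rw [integral_const_mul, integral_pow_mul_exp_neg_mul m (inv_pos.mpr hθ),
    inv_pow, div_inv_eq_mul, pow_succ]
  field_simp

/-- `L_{θ*}` applied to the monomial `x ^ n / n!`, evaluated at `x`. -/
noncomputable def harmonicGenPow (n : ℕ) (θs x : ℝ) : ℝ :=
  (∫ u in Ioo (0:ℝ) 1, u⁻¹ * (((x * (1 - u)) ^ n - x ^ n) / n.factorial)) +
    ∫ u in Ioi (0:ℝ), u⁻¹ * exp (-u) * (((x + u * θs) ^ n - x ^ n) / n.factorial)

theorem exp_div_mul_harmonicGenPow (θ : ℝ) (n : ℕ) (θs x : ℝ) :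
    exp (-x / θ) / θ * harmonicGenPow n θs x
      = (∫ u in Ioo (0:ℝ) 1, u⁻¹ * ((1 - u) ^ n - 1)) / n.factorial * (exp (-x / θ) / θ * x ^ n)
        + ∑ k ∈ Finset.Icc 1 n,
            θs ^ k / k / (n - k).factorial * (exp (-x / θ) / θ * x ^ (n - k)) := by
  rw [harmonicGenPow, integral_thinning_pow, integral_reservoir_pow, mul_add, Finset.mul_sum]
  congr 1
  · ring
  · exact Finset.sum_congr rfl fun k _ => by ring

theorem integrableOn_exp_div_mul_harmonicGenPow {θ : ℝ} (hθ : 0 < θ) (n : ℕ) (θs : ℝ) :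
    IntegrableOn (fun x => exp (-x / θ) / θ * harmonicGenPow n θs x) (Ioi 0) := by
  simp_rw [exp_div_mul_harmonicGenPow]
  exact ((integrableOn_exp_div_mul_pow hθ n).const_mul _).add
    (integrable_finsetSum _ fun k _ => (integrableOn_exp_div_mul_pow hθ (n - k)).const_mul _)

theorem integral_exp_div_mul_harmonicGenPow {θ : ℝ} (hθ : 0 < θ) (n : ℕ) (θs : ℝ) :
    ∫ x in Ioi (0:ℝ), exp (-x / θ) / θ * harmonicGenPow n θs x
      = θ ^ n * (∫ u in Ioo (0:ℝ) 1, u⁻¹ * ((1 - u) ^ n - 1))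
        + ∑ k ∈ Finset.Icc 1 n, θ ^ (n - k) * θs ^ k / k := by
  simp_rw [exp_div_mul_harmonicGenPow]
  rw [integral_add ((integrableOn_exp_div_mul_pow hθ n).const_mul _)
      (integrable_finsetSum _ fun k _ => (integrableOn_exp_div_mul_pow hθ (n - k)).const_mul _),
    integral_const_mul, integral_exp_div_mul_pow hθ, integral_finsetSum _ fun k _ =>
      (integrableOn_exp_div_mul_pow hθ (n - k)).const_mul _]
  have hfact : ∀ m : ℕ, (m.factorial : ℝ) ≠ 0 := fun m => by exact_mod_cast m.factorial_ne_zero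
  congr 1
  · field_simp [hfact]
  · refine Finset.sum_congr rfl fun k _ => ?_
    rw [integral_const_mul, integral_exp_div_mul_pow hθ]
    field_simp [hfact]

theorem harmonic_boundary_intertwining (n : ℕ) (θ θs : ℝ)
    (hθ : 0 < θ) :
    (∀ x : ℝ, 0 ≤ x →
      IntegrableOn (fun u : ℝ => u⁻¹ * (((x * (1 - u)) ^ n - x ^ n) / n.factorial))
        (Set.Ioo 0 1) volume) ∧
    (∀ x : ℝ, 0 ≤ x →
      IntegrableOn (fun u : ℝ => u⁻¹ * Real.exp (-u) * (((x + u * θs) ^ n - x ^ n) / n.factorial))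
        (Set.Ioi 0) volume) ∧
    IntegrableOn (fun x : ℝ => (Real.exp (-x / θ) / θ) *
      ((∫ u in Set.Ioo (0:ℝ) 1, u⁻¹ * (((x * (1 - u)) ^ n - x ^ n) / n.factorial)) +
       (∫ u in Set.Ioi (0:ℝ), u⁻¹ * Real.exp (-u) * (((x + u * θs) ^ n - x ^ n) / n.factorial))))
      (Set.Ioi 0) volume ∧
    IntegrableOn (fun u : ℝ => u⁻¹ * (((1 - u) * θ + u * θs) ^ n - θ ^ n))
      (Set.Ioo 0 1) volume ∧
    IntegrableOn (fun u : ℝ => u⁻¹ * ((1 - u) ^ n - 1)) (Set.Ioo 0 1) volume ∧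
    (∫ x in Set.Ioi (0:ℝ), (Real.exp (-x / θ) / θ) *
      ((∫ u in Set.Ioo (0:ℝ) 1, u⁻¹ * (((x * (1 - u)) ^ n - x ^ n) / n.factorial)) +
       (∫ u in Set.Ioi (0:ℝ), u⁻¹ * Real.exp (-u) * (((x + u * θs) ^ n - x ^ n) / n.factorial))))
      = ∫ u in Set.Ioo (0:ℝ) 1, u⁻¹ * (((1 - u) * θ + u * θs) ^ n - θ ^ n) ∧
    (∫ u in Set.Ioo (0:ℝ) 1, u⁻¹ * (((1 - u) * θ + u * θs) ^ n - θ ^ n))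
      = θ ^ n * (∫ u in Set.Ioo (0:ℝ) 1, u⁻¹ * ((1 - u) ^ n - 1)) +
        ∑ k ∈ Finset.Icc 1 n, θ ^ (n - k) * θs ^ k / k := by
  refine ⟨fun x _ => integrableOn_thinning_pow n x, fun x _ => integrableOn_reservoir_pow n θs x,
    integrableOn_exp_div_mul_harmonicGenPow hθ n θs, integrableOn_inv_mul_affine_pow_sub_pow n θ θs,
    integrableOn_inv_mul_one_sub_pow_sub_one n, ?_, integral_inv_mul_affine_pow_sub_pow_eq n θ θs⟩
  rw [integral_inv_mul_affine_pow_sub_pow_eq]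
  exact integral_exp_div_mul_harmonicGenPow hθ n θs
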